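/- If X is an absolutely strongly star-Lindelöf space of cardinality less than 𝔡, then X is selectively strongly star-Menger: for each sequence (Uₙ) of open covers and each sequence (Dₙ) of dense subsets of X there are finite sets Fₙ ⊆ Dₙ with {St(Fₙ,Uₙ) : n ∈ ω} an open cover of X. -/

import Mathlib

/-!
Enumerate, for each `n`, a countable set `Cₙ = {eₙ(k)} ⊆ Dₙ` with `St(Cₙ, Uₙ) = X`, and for each
point `x` let `f_x(n)` be an index `k` with `x ∈ St({eₙ(k)}, Uₙ)`. Fewer than `𝔡` functions
do not dominate, so a single `g` satisfies `f_x(n) < g(n)` for some `n`, for every `x`; then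
`Fₙ = {eₙ(k) : k < g(n)}` works.
-/


open Set Filter

variable {X : Type u}

def star {X : Type u} (A : Set X) (U : Set (Set X)) : Set X :=
  ⋃₀ {u ∈ U | (u ∩ A).Nonempty}

def IsOpenCover {X : Type u} [TopologicalSpace X] (U : Set (Set X)) : Prop :=
  (∀ u ∈ U, IsOpen u) ∧ ⋃₀ U = univ

noncomputable def domNum : Cardinal :=
  sInf {c | ∃ D : Set (ℕ → ℕ), Cardinal.mk D = c ∧
    ∀ f : ℕ → ℕ, ∃ g ∈ D, ∀ᶠ n in atTop, f n ≤ g n}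

noncomputable def boundNum : Cardinal :=
  sInf {c | ∃ B : Set (ℕ → ℕ), Cardinal.mk B = c ∧
    ¬ ∃ g : ℕ → ℕ, ∀ f ∈ B, ∀ᶠ n in atTop, f n ≤ g n}

noncomputable def covMeager : Cardinal :=
  sInf {c | ∃ F : Set (ℕ → ℕ), Cardinal.mk F = c ∧
    ¬ ∃ g : ℕ → ℕ, ∀ f ∈ F, {n | g n = f n}.Infinite}

def StronglyStarLindelof (X : Type u) [TopologicalSpace X] : Prop :=
  ∀ U : Set (Set X), IsOpenCover U →
    ∃ C : Set X, C.Countable ∧ star C U = univ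

def AbsStronglyStarLindelof (X : Type u) [TopologicalSpace X] : Prop :=
  ∀ U : Set (Set X), IsOpenCover U → ∀ D : Set X, Dense D →
    ∃ C : Set X, C ⊆ D ∧ C.Countable ∧ star C U = univ

def StronglyStarMenger (X : Type u) [TopologicalSpace X] : Prop :=
  ∀ U : ℕ → Set (Set X), (∀ n, IsOpenCover (U n)) →
    ∃ F : ℕ → Finset X, ⋃ n, star (↑(F n)) (U n) = univ

def AbsStronglyStarMenger (X : Type u) [TopologicalSpace X] : Prop :=
  ∀ U : ℕ → Set (Set X), (∀ n, IsOpenCover (U n)) → ∀ D : Set X, Dense D →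
    ∃ F : ℕ → Finset X, (∀ n, ↑(F n) ⊆ D) ∧ ⋃ n, star (↑(F n)) (U n) = univ

def SelStronglyStarMenger (X : Type u) [TopologicalSpace X] : Prop :=
  ∀ U : ℕ → Set (Set X), (∀ n, IsOpenCover (U n)) →
    ∀ D : ℕ → Set X, (∀ n, Dense (D n)) →
      ∃ F : ℕ → Finset X, (∀ n, ↑(F n) ⊆ D n) ∧ ⋃ n, star (↑(F n)) (U n) = univ

def StronglyStarHurewicz (X : Type u) [TopologicalSpace X] : Prop :=
  ∀ U : ℕ → Set (Set X), (∀ n, IsOpenCover (U n)) →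
    ∃ F : ℕ → Finset X, ∀ x : X, ∀ᶠ n in atTop, x ∈ star (↑(F n)) (U n)

def SelStronglyStarHurewicz (X : Type u) [TopologicalSpace X] : Prop :=
  ∀ U : ℕ → Set (Set X), (∀ n, IsOpenCover (U n)) →
    ∀ D : ℕ → Set X, (∀ n, Dense (D n)) →
      ∃ F : ℕ → Finset X, (∀ n, ↑(F n) ⊆ D n) ∧
        ∀ x : X, ∀ᶠ n in atTop, x ∈ star (↑(F n)) (U n)

def StronglyStarRothberger (X : Type u) [TopologicalSpace X] : Prop :=
  ∀ U : ℕ → Set (Set X), (∀ n, IsOpenCover (U n)) →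
    ∃ x : ℕ → X, ⋃ n, star {x n} (U n) = univ

def SelStronglyStarRothberger (X : Type u) [TopologicalSpace X] : Prop :=
  ∀ U : ℕ → Set (Set X), (∀ n, IsOpenCover (U n)) →
    ∀ D : ℕ → Set X, (∀ n, Dense (D n)) →
      ∃ d : ℕ → X, (∀ n, d n ∈ D n) ∧ ⋃ n, star {d n} (U n) = univ

def DiscreteIn {X : Type u} [TopologicalSpace X] (C : Set X) : Prop :=
  ∀ x ∈ C, ∃ O : Set X, IsOpen O ∧ O ∩ C = {x}

def CountableExtent (X : Type u) [TopologicalSpace X] : Prop :=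
  ∀ C : Set X, IsClosed C → DiscreteIn C → C.Countable

def SelSScdOGamma (X : Type u) [TopologicalSpace X] : Prop :=
  ∀ U : ℕ → Set (Set X), (∀ n, IsOpenCover (U n)) →
    ∀ D : ℕ → Set X, (∀ n, Dense (D n)) →
      ∃ C : ℕ → Set X, (∀ n, C n ⊆ D n ∧ IsClosed (C n) ∧ DiscreteIn (C n)) ∧
        ∀ x : X, ∀ᶠ n in atTop, x ∈ star (C n) (U n)

def SelSScdOO (X : Type u) [TopologicalSpace X] : Prop :=
  ∀ U : ℕ → Set (Set X), (∀ n, IsOpenCover (U n)) →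
    ∀ D : ℕ → Set X, (∀ n, Dense (D n)) →
      ∃ C : ℕ → Set X, (∀ n, C n ⊆ D n ∧ IsClosed (C n) ∧ DiscreteIn (C n)) ∧
        ⋃ n, star (C n) (U n) = univ

def StarSigmaK (X : Type u) [TopologicalSpace X] (K : Set (Set X)) : Prop :=
  ∀ U : Set (Set X), IsOpenCover U →
    ∃ E : ℕ → Set X, (∀ m, E m ∈ K) ∧ star (⋃ m, E m) U = univ

def AbsStarSigmaK (X : Type u) [TopologicalSpace X] (K : Set (Set X)) : Prop :=
  ∀ D : Set X, Dense D → ∀ U : Set (Set X), IsOpenCover U →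
    ∃ E : ℕ → Set X, (∀ m, E m ∈ K ∧ E m ⊆ D) ∧ star (⋃ m, E m) U = univ

def AbsNbhdStarMenger (X : Type u) [TopologicalSpace X] : Prop :=
  ∀ U : ℕ → Set (Set X), (∀ n, IsOpenCover (U n)) → ∀ D : Set X, Dense D →
    ∃ F : ℕ → Finset X, (∀ n, ↑(F n) ⊆ D) ∧
      ∀ O : ℕ → Set X, (∀ n, IsOpen (O n) ∧ ↑(F n) ⊆ O n) →
        ⋃ n, star (O n) (U n) = univ

def AbsNbhdStarHurewicz (X : Type u) [TopologicalSpace X] : Prop :=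
  ∀ U : ℕ → Set (Set X), (∀ n, IsOpenCover (U n)) → ∀ D : Set X, Dense D →
    ∃ F : ℕ → Finset X, (∀ n, ↑(F n) ⊆ D) ∧
      ∀ O : ℕ → Set X, (∀ n, IsOpen (O n) ∧ ↑(F n) ⊆ O n) →
        ∀ x : X, ∀ᶠ n in atTop, x ∈ star (O n) (U n)


theorem star_mono {A B : Set X} {U : Set (Set X)} (hAB : A ⊆ B) : star A U ⊆ star B U :=
  sUnion_mono fun _ ⟨hu, hne⟩ => ⟨hu, hne.mono (inter_subset_inter_right _ hAB)⟩

@[simp]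
theorem star_empty (U : Set (Set X)) : star ∅ U = ∅ := by
  simp [_root_.star]

theorem star_iUnion {ι : Sort*} (A : ι → Set X) (U : Set (Set X)) :
    star (⋃ i, A i) U = ⋃ i, star (A i) U := by
  ext x
  simp only [_root_.star, mem_sUnion, mem_iUnion, mem_ofPred_eq, inter_iUnion, nonempty_iUnion]
  grind

theorem AbsStronglyStarLindelof.exists_seq_star_eq_univ [TopologicalSpace X] [Nonempty X]
    (h : AbsStronglyStarLindelof X) {U : Set (Set X)} (hU : IsOpenCover U) {D : Set X}
    (hD : Dense D) : ∃ e : ℕ → X, (∀ k, e k ∈ D) ∧ ⋃ k, star {e k} U = univ := by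
  obtain ⟨C, hCD, hC, hCU⟩ := h U hU D hD
  have hCne : C.Nonempty := by
    rw [nonempty_iff_ne_empty]
    rintro rfl
    exact empty_ne_univ (by simpa using hCU)
  obtain ⟨e, rfl⟩ := hC.exists_eq_range hCne
  refine ⟨e, fun k => hCD (mem_range_self k), ?_⟩
  rwa [← star_iUnion, iUnion_singleton_eq_range]

theorem exists_frequently_lt_of_mk_lt_domNum {ι : Type u} (f : ι → ℕ → ℕ)
    (h : Cardinal.mk ι < Cardinal.lift.{u} domNum) :
    ∃ g : ℕ → ℕ, ∀ i, ∃ᶠ n in atTop, f i n < g n := by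
  by_contra! hdom
  have hrange : domNum ≤ Cardinal.mk (range f) := by
    refine csInf_le' ⟨range f, rfl, fun g => ?_⟩
    obtain ⟨i, hi⟩ := hdom g
    exact ⟨f i, mem_range_self i, hi⟩
  have hsize : Cardinal.lift.{u} (Cardinal.mk (range f)) ≤ Cardinal.mk ι := by
    simpa using Cardinal.mk_range_le_lift (f := f)
  exact ((Cardinal.lift_le.2 hrange).trans hsize).not_gt h

theorem stmt8 {X : Type u} [TopologicalSpace X]
    (hassl : AbsStronglyStarLindelof X) (hcard : Cardinal.mk X < Cardinal.lift.{u} domNum) :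
    SelStronglyStarMenger X := by
  classical
  intro U hU D hD
  rcases isEmpty_or_nonempty X with hX | hX
  · exact ⟨fun _ => ∅, fun _ => by simp, eq_univ_of_forall isEmptyElim⟩
  choose e he_mem he_star using fun n => hassl.exists_seq_star_eq_univ (hU n) (hD n)
  have hcover : ∀ x n, ∃ k, x ∈ star {e n k} (U n) := fun x n =>
    mem_iUnion.1 ((he_star n).symm ▸ mem_univ x)
  choose f hf using hcover
  obtain ⟨g, hg⟩ := exists_frequently_lt_of_mk_lt_domNum f hcard
  refine ⟨fun n => (Finset.range (g n)).image (e n), fun n => ?_, ?_⟩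
  · simpa [Set.subset_def] using fun k _ => he_mem n k
  · refine eq_univ_of_forall fun x => ?_
    obtain ⟨n, hn⟩ := (hg x).exists
    refine mem_iUnion.2 ⟨n, star_mono ?_ (hf x n)⟩
    simpa using ⟨f x n, hn, rfl⟩
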